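/- If μ_n = μ_{n+1} (i.e., μ_n is a common eigenvalue of the two decoupled Dirichlet problems on (-1,0) and (0,1)), then μ_n is simultaneously an eigenvalue of the point-mass problem (λ_{n+1} = μ_n) and of the regular problem with M = 0 (λ'_{n+1} = μ_n). -/

import Mathlib

open Real Set Filter

/-- `y` (with derivative `yD`) solves the Sturm–Liouville equation
`-(σ y')' + q y = lam ρ y` on `[a,b]`. -/
def SL (σ q ρ : ℝ → ℝ) (lam a b : ℝ) (y yD : ℝ → ℝ) : Prop :=
  (∀ x ∈ Set.Icc a b, HasDerivAt y (yD x) x) ∧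
  (∀ x ∈ Set.Icc a b, HasDerivAt (fun t => σ t * yD t) (q x * y x - lam * ρ x * y x) x)

/-- Coefficient is continuous and positive on `[a,b]`. -/
def GoodCoeff (f : ℝ → ℝ) (a b : ℝ) : Prop :=
  ContinuousOn f (Set.Icc a b) ∧ ∀ x ∈ Set.Icc a b, 0 < f x

/-!
Both Dirichlet eigenfunctions vanish at the interface, so for any constants `c₁, c₂` the pair
`(c₁ y₁, c₂ y₂)` is continuous at `0` with value `0`, and the point-mass term `μ₀ M u(0)` drops
out. Both transmission conditions thus reduce to the single flux condition
`c₁ σ₁(0) y₁'(0) = c₂ σ₂(0) y₂'(0)`, one linear equation in two unknowns, which has a nonzero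
solution.
-/

theorem SL.const_mul {σ q ρ : ℝ → ℝ} {lam a b : ℝ} {y yD : ℝ → ℝ}
    (h : SL σ q ρ lam a b y yD) (c : ℝ) :
    SL σ q ρ lam a b (fun t => c * y t) (fun t => c * yD t) := by
  refine ⟨fun x hx => (h.1 x hx).const_mul c, fun x hx => ?_⟩
  have hmul : (fun t => σ t * (c * yD t)) = fun t => c * (σ t * yD t) := by
    funext t; ring
  rw [hmul]
  exact ((h.2 x hx).const_mul c).congr_deriv (by ring)

theorem exists_mul_eq_mul_and_ne_zero_or_ne_zero {R : Type*} [CommMonoidWithZero R]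
    [Nontrivial R] (a b : R) : ∃ c₁ c₂ : R, c₁ * a = c₂ * b ∧ (c₁ ≠ 0 ∨ c₂ ≠ 0) := by
  by_cases hab : a = 0 ∧ b = 0
  · exact ⟨1, 1, by rw [hab.1, hab.2], Or.inl one_ne_zero⟩
  · exact ⟨b, a, mul_comm b a, by tauto⟩

theorem common_eigenvalue_transfer_general
    (ρ₁ σ₁ q₁ ρ₂ σ₂ q₂ : ℝ → ℝ) (M μ₀ : ℝ)
    (y₁ yD₁ y₂ yD₂ : ℝ → ℝ)
    -- μ₀ is a Dirichlet eigenvalue on (-1,0):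
    (h₁ : SL σ₁ q₁ ρ₁ μ₀ (-1) 0 y₁ yD₁) (h₁bc : y₁ (-1) = 0 ∧ y₁ 0 = 0)
    (h₁nt : ∃ x ∈ Set.Icc (-1:ℝ) 0, y₁ x ≠ 0)
    -- μ₀ is a Dirichlet eigenvalue on (0,1):
    (h₂ : SL σ₂ q₂ ρ₂ μ₀ 0 1 y₂ yD₂) (h₂bc : y₂ 0 = 0 ∧ y₂ 1 = 0)
    (h₂nt : ∃ x ∈ Set.Icc (0:ℝ) 1, y₂ x ≠ 0) :
    -- μ₀ is an eigenvalue of the point-mass problem: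
    (∃ u uD v vD : ℝ → ℝ,
      SL σ₁ q₁ ρ₁ μ₀ (-1) 0 u uD ∧ SL σ₂ q₂ ρ₂ μ₀ 0 1 v vD ∧
      u (-1) = 0 ∧ v 1 = 0 ∧ u 0 = v 0 ∧
      σ₁ 0 * uD 0 - σ₂ 0 * vD 0 = μ₀ * M * u 0 ∧
      ((∃ x ∈ Set.Icc (-1:ℝ) 0, u x ≠ 0) ∨ (∃ x ∈ Set.Icc (0:ℝ) 1, v x ≠ 0))) ∧
    -- μ₀ is an eigenvalue of the regular (M = 0) problem:
    (∃ u uD v vD : ℝ → ℝ,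
      SL σ₁ q₁ ρ₁ μ₀ (-1) 0 u uD ∧ SL σ₂ q₂ ρ₂ μ₀ 0 1 v vD ∧
      u (-1) = 0 ∧ v 1 = 0 ∧ u 0 = v 0 ∧
      σ₁ 0 * uD 0 = σ₂ 0 * vD 0 ∧
      ((∃ x ∈ Set.Icc (-1:ℝ) 0, u x ≠ 0) ∨ (∃ x ∈ Set.Icc (0:ℝ) 1, v x ≠ 0))) := by
  obtain ⟨c₁, c₂, hflux, hc⟩ :=
    exists_mul_eq_mul_and_ne_zero_or_ne_zero (σ₁ 0 * yD₁ 0) (σ₂ 0 * yD₂ 0)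
  have hflux' : σ₁ 0 * (c₁ * yD₁ 0) = σ₂ 0 * (c₂ * yD₂ 0) := by linear_combination hflux
  have hnt : (∃ x ∈ Set.Icc (-1:ℝ) 0, c₁ * y₁ x ≠ 0) ∨ (∃ x ∈ Set.Icc (0:ℝ) 1, c₂ * y₂ x ≠ 0) :=
    hc.imp (fun hc₁ => h₁nt.imp fun _ ⟨hx, hy⟩ => ⟨hx, mul_ne_zero hc₁ hy⟩)
      (fun hc₂ => h₂nt.imp fun _ ⟨hx, hy⟩ => ⟨hx, mul_ne_zero hc₂ hy⟩)
  have hcont : c₁ * y₁ 0 = c₂ * y₂ 0 := by rw [h₁bc.2, h₂bc.1, mul_zero, mul_zero]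
  refine ⟨⟨_, _, _, _, h₁.const_mul c₁, h₂.const_mul c₂, ?_, ?_, hcont, ?_, hnt⟩,
    ⟨_, _, _, _, h₁.const_mul c₁, h₂.const_mul c₂, ?_, ?_, hcont, hflux', hnt⟩⟩ <;>
    simp only [h₁bc.1, h₁bc.2, h₂bc.2, hflux', mul_zero, sub_self]

/-- If `μ` is a common eigenvalue of the two decoupled Dirichlet problems on
`(-1,0)` and `(0,1)`, then `μ` is simultaneously an eigenvalue of the point-mass
problem and of the regular (`M = 0`) transmission problem. -/
theorem common_eigenvalue_transfer
    (ρ₁ σ₁ q₁ ρ₂ σ₂ q₂ : ℝ → ℝ) (M μ₀ : ℝ) (hM : 0 < M)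
    (hρ₁ : GoodCoeff ρ₁ (-1) 0) (hσ₁ : GoodCoeff σ₁ (-1) 0) (hq₁ : GoodCoeff q₁ (-1) 0)
    (hρ₂ : GoodCoeff ρ₂ 0 1) (hσ₂ : GoodCoeff σ₂ 0 1) (hq₂ : GoodCoeff q₂ 0 1)
    (y₁ yD₁ y₂ yD₂ : ℝ → ℝ)
    -- μ₀ is a Dirichlet eigenvalue on (-1,0):
    (h₁ : SL σ₁ q₁ ρ₁ μ₀ (-1) 0 y₁ yD₁) (h₁bc : y₁ (-1) = 0 ∧ y₁ 0 = 0)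
    (h₁nt : ∃ x ∈ Set.Icc (-1:ℝ) 0, y₁ x ≠ 0)
    -- μ₀ is a Dirichlet eigenvalue on (0,1):
    (h₂ : SL σ₂ q₂ ρ₂ μ₀ 0 1 y₂ yD₂) (h₂bc : y₂ 0 = 0 ∧ y₂ 1 = 0)
    (h₂nt : ∃ x ∈ Set.Icc (0:ℝ) 1, y₂ x ≠ 0) :
    -- μ₀ is an eigenvalue of the point-mass problem:
    (∃ u uD v vD : ℝ → ℝ,
      SL σ₁ q₁ ρ₁ μ₀ (-1) 0 u uD ∧ SL σ₂ q₂ ρ₂ μ₀ 0 1 v vD ∧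
      u (-1) = 0 ∧ v 1 = 0 ∧ u 0 = v 0 ∧
      σ₁ 0 * uD 0 - σ₂ 0 * vD 0 = μ₀ * M * u 0 ∧
      ((∃ x ∈ Set.Icc (-1:ℝ) 0, u x ≠ 0) ∨ (∃ x ∈ Set.Icc (0:ℝ) 1, v x ≠ 0))) ∧
    -- μ₀ is an eigenvalue of the regular (M = 0) problem:
    (∃ u uD v vD : ℝ → ℝ,
      SL σ₁ q₁ ρ₁ μ₀ (-1) 0 u uD ∧ SL σ₂ q₂ ρ₂ μ₀ 0 1 v vD ∧
      u (-1) = 0 ∧ v 1 = 0 ∧ u 0 = v 0 ∧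
      σ₁ 0 * uD 0 = σ₂ 0 * vD 0 ∧
      ((∃ x ∈ Set.Icc (-1:ℝ) 0, u x ≠ 0) ∨ (∃ x ∈ Set.Icc (0:ℝ) 1, v x ≠ 0))) :=
  common_eigenvalue_transfer_general ρ₁ σ₁ q₁ ρ₂ σ₂ q₂ M μ₀ y₁ yD₁ y₂ yD₂ h₁ h₁bc h₁nt h₂ h₂bc h₂nt
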